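/- arXiv:hep-th/9303148 — 4 statements merged into one kernel-verified Lean document; each statement's English description precedes it below -/
import Mathlib

section
/- If R ∈ Mₙ ⊗ Mₙ is an invertible solution of the quantum Yang–Baxter equation R₁₂R₁₃R₂₃ = R₂₃R₁₃R₁₂, then the matrix Q = R₂₁R₁₂ satisfies R₂₁ Q₁₃ R₁₂ Q₂₃ = Q₂₃ R₂₁ Q₁₃ R₁₂ (as matrices on V ⊗ V ⊗ V). -/
open Matrix

variable {k : Type*} [Field k] {n : ℕ}

/-- Pairs of indices, labelling a basis of `V ⊗ V` (or multi-indices `I = (i₀, i₁)`). -/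
abbrev I2 (n : ℕ) := Fin n × Fin n

/-- Triples of indices, labelling a basis of `V ⊗ V ⊗ V`. -/
abbrev I3 (n : ℕ) := Fin n × Fin n × Fin n

/-- `A₁₂ = A ⊗ id`, the lift of an operator on `V ⊗ V` to the first two factors of
`V ⊗ V ⊗ V`. -/
def amp12 (A : Matrix (I2 n) (I2 n) k) : Matrix (I3 n) (I3 n) k :=
  Matrix.of fun p q => A (p.1, p.2.1) (q.1, q.2.1) * (if p.2.2 = q.2.2 then 1 else 0)

/-- `A₁₃`, acting on the first and third factors of `V ⊗ V ⊗ V`. -/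
def amp13 (A : Matrix (I2 n) (I2 n) k) : Matrix (I3 n) (I3 n) k :=
  Matrix.of fun p q => A (p.1, p.2.2) (q.1, q.2.2) * (if p.2.1 = q.2.1 then 1 else 0)

/-- `A₂₃`, acting on the last two factors of `V ⊗ V ⊗ V`. -/
def amp23 (A : Matrix (I2 n) (I2 n) k) : Matrix (I3 n) (I3 n) k :=
  Matrix.of fun p q => A (p.2.1, p.2.2) (q.2.1, q.2.2) * (if p.1 = q.1 then 1 else 0)

/-- `A₂₁ = τ ∘ A ∘ τ`, conjugation by the flip of the two tensor factors. -/
def flipM (A : Matrix (I2 n) (I2 n) k) : Matrix (I2 n) (I2 n) k :=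
  Matrix.of fun p q => A (p.2, p.1) (q.2, q.1)

/-- The quantum Yang–Baxter equation `R₁₂R₁₃R₂₃ = R₂₃R₁₃R₁₂`. -/
def QYBE (R : Matrix (I2 n) (I2 n) k) : Prop :=
  amp12 R * amp13 R * amp23 R = amp23 R * amp13 R * amp12 R

/-- `Rtil` is the second inverse `R̃ = ((R^{t₂})⁻¹)^{t₂}` of `R`, characterized by
`R̃ⁱₐᵇₗ Rᵃⱼᵏᵦ = δⁱⱼ δᵏₗ = Rⁱₐᵇₗ R̃ᵃⱼᵏᵦ` (sum over `a`, `b`).  Here the entry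
`R ((i,k),(j,l))` denotes `Rⁱⱼᵏₗ`. -/
def IsSecondInverse (R Rtil : Matrix (I2 n) (I2 n) k) : Prop :=
  (∀ i j kk l : Fin n, ∑ a, ∑ b, Rtil (i, b) (a, l) * R (a, kk) (j, b)
      = (if i = j then (1 : k) else 0) * (if kk = l then 1 else 0)) ∧
  (∀ i j kk l : Fin n, ∑ a, ∑ b, R (i, b) (a, l) * Rtil (a, kk) (j, b)
      = (if i = j then (1 : k) else 0) * (if kk = l then 1 else 0))

/-- The structure constants
`c^{IJ}_K = R̃ᵃ_{i₁}{}^{j₀}_b R⁻¹{}ᵇ_{k₀}{}^{i₀}_c R^{k₁}_n{}ᶜ_m Rᵐₐ{}ⁿ_{j₁}`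
of the matrix braided-Lie algebra associated to a bi-invertible R-matrix
(repeated indices summed). -/
def braidedC (R Rinv Rtil : Matrix (I2 n) (I2 n) k) (I J K : I2 n) : k :=
  ∑ a, ∑ b, ∑ c, ∑ m, ∑ nn,
    Rtil (a, J.1) (I.2, b) * Rinv (b, I.1) (K.1, c) *
      R (K.2, c) (nn, m) * R (m, nn) (a, J.2)


section Aux

variable {k : Type*} [Field k] {n : ℕ}

/-- Swapping the last two tensor factors. -/
def e23' : I3 n ≃ I3 n where
  toFun p := (p.1, p.2.2, p.2.1)
  invFun p := (p.1, p.2.2, p.2.1)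
  left_inv := fun ⟨_, _, _⟩ => rfl
  right_inv := fun ⟨_, _, _⟩ => rfl

/-- Swapping the first and third tensor factors. -/
def e13' : I3 n ≃ I3 n where
  toFun p := (p.2.2, p.2.1, p.1)
  invFun p := (p.2.2, p.2.1, p.1)
  left_inv := fun ⟨_, _, _⟩ => rfl
  right_inv := fun ⟨_, _, _⟩ => rfl

/-- The cyclic permutation 1→2→3→1 of tensor factors (as a reindexing map). -/
def ecyc' : I3 n ≃ I3 n where
  toFun p := (p.2.1, p.2.2, p.1)
  invFun p := (p.2.2, p.1, p.2.1)
  left_inv := fun ⟨_, _, _⟩ => rfl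
  right_inv := fun ⟨_, _, _⟩ => rfl

lemma submatrix_conj_mul (e : I3 n ≃ I3 n) (A B : Matrix (I3 n) (I3 n) k) :
    (A * B).submatrix e e = A.submatrix e e * B.submatrix e e :=
  (Matrix.submatrix_mul_equiv A B e e e).symm

lemma amp12_mul (A B : Matrix (I2 n) (I2 n) k) :
    amp12 (A * B) = amp12 A * amp12 B := by
  ext ⟨i, j, l⟩ ⟨i', j', l'⟩
  simp only [amp12, Matrix.mul_apply, Matrix.of_apply, Fintype.sum_prod_type, mul_ite, mul_one,
    mul_zero, ite_mul, zero_mul, one_mul, Finset.sum_ite_irrel, Finset.sum_const_zero]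
  simp only [Finset.sum_ite_eq', Finset.mem_univ, if_true]
  by_cases h : l = l' <;> simp [h]

lemma amp13_mul (A B : Matrix (I2 n) (I2 n) k) :
    amp13 (A * B) = amp13 A * amp13 B := by
  ext ⟨i, j, l⟩ ⟨i', j', l'⟩
  simp only [amp13, Matrix.mul_apply, Matrix.of_apply, Fintype.sum_prod_type, mul_ite, mul_one,
    mul_zero, ite_mul, zero_mul, Finset.sum_ite_irrel, Finset.sum_const_zero, Finset.mul_sum]
  by_cases h : j = j' <;> simp [h]

lemma amp23_mul (A B : Matrix (I2 n) (I2 n) k) :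
    amp23 (A * B) = amp23 A * amp23 B := by
  ext ⟨i, j, l⟩ ⟨i', j', l'⟩
  simp only [amp23, Matrix.mul_apply, Matrix.of_apply, Fintype.sum_prod_type, mul_ite, mul_one,
    mul_zero, ite_mul, zero_mul, Finset.sum_ite_irrel, Finset.sum_const_zero, Finset.mul_sum]
  by_cases h : i = i' <;> simp [h]

-- conjugation lemmas (entrywise definitional)
lemma conj_e23_12 (A : Matrix (I2 n) (I2 n) k) :
    (amp12 A).submatrix (e23' (n := n)) e23' = amp13 A := rfl
lemma conj_e23_13 (A : Matrix (I2 n) (I2 n) k) :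
    (amp13 A).submatrix (e23' (n := n)) e23' = amp12 A := rfl
lemma conj_e23_23 (A : Matrix (I2 n) (I2 n) k) :
    (amp23 A).submatrix (e23' (n := n)) e23' = amp23 (flipM A) := rfl
lemma conj_e13_12 (A : Matrix (I2 n) (I2 n) k) :
    (amp12 A).submatrix (e13' (n := n)) e13' = amp23 (flipM A) := rfl
lemma conj_e13_13 (A : Matrix (I2 n) (I2 n) k) :
    (amp13 A).submatrix (e13' (n := n)) e13' = amp13 (flipM A) := rfl
lemma conj_e13_23 (A : Matrix (I2 n) (I2 n) k) :
    (amp23 A).submatrix (e13' (n := n)) e13' = amp12 (flipM A) := rfl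
lemma conj_ecyc_12 (A : Matrix (I2 n) (I2 n) k) :
    (amp12 A).submatrix (ecyc' (n := n)) ecyc' = amp23 A := rfl
lemma conj_ecyc_13 (A : Matrix (I2 n) (I2 n) k) :
    (amp13 A).submatrix (ecyc' (n := n)) ecyc' = amp12 (flipM A) := rfl
lemma conj_ecyc_23 (A : Matrix (I2 n) (I2 n) k) :
    (amp23 A).submatrix (ecyc' (n := n)) ecyc' = amp13 (flipM A) := rfl

lemma key_monoid {M : Type*} [Ring M] (a a' b b' c c' : M)
    (h0 : a * b * c = c * b * a) (h1 : b * a * c' = c' * a * b)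
    (h2 : c' * b' * a' = a' * b' * c') (h3 : c * a' * b' = b' * a' * c) :
    a' * (b' * b) * a * (c' * c) = c' * c * a' * (b' * b) * a := by
  calc a' * (b' * b) * a * (c' * c)
      = a' * b' * (b * a * c') * c := by noncomm_ring
    _ = a' * b' * (c' * a * b) * c := by rw [h1]
    _ = a' * b' * c' * (a * b * c) := by noncomm_ring
    _ = a' * b' * c' * (c * b * a) := by rw [h0]
    _ = c' * b' * a' * (c * b * a) := by rw [h2]
    _ = c' * (b' * a' * c) * (b * a) := by noncomm_ring
    _ = c' * (c * a' * b') * (b * a) := by rw [← h3]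
    _ = c' * c * a' * (b' * b) * a := by noncomm_ring

end Aux

/-- If `R` is an invertible solution of the QYBE `R₁₂R₁₃R₂₃ = R₂₃R₁₃R₁₂`, then
`Q = R₂₁R₁₂` satisfies `R₂₁ Q₁₃ R₁₂ Q₂₃ = Q₂₃ R₂₁ Q₁₃ R₁₂` on `V ⊗ V ⊗ V`. -/
theorem reflection_identity (R : Matrix (I2 n) (I2 n) k) (hinv : IsUnit R) (hYB : QYBE R) :
    amp12 (flipM R) * amp13 (flipM R * R) * amp12 R * amp23 (flipM R * R)
      = amp23 (flipM R * R) * amp12 (flipM R) * amp13 (flipM R * R) * amp12 R := by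
  classical
  set a := amp12 R
  set a' := amp12 (flipM R)
  set b := amp13 R
  set b' := amp13 (flipM R)
  set c := amp23 R
  set c' := amp23 (flipM R)
  have h0 : a * b * c = c * b * a := hYB
  have h1 : b * a * c' = c' * a * b := by
    have := congrArg (fun M => M.submatrix (e23' (n := n)) e23') hYB
    simpa only [submatrix_conj_mul, conj_e23_12, conj_e23_13, conj_e23_23] using this
  have h2 : c' * b' * a' = a' * b' * c' := by
    have := congrArg (fun M => M.submatrix (e13' (n := n)) e13') hYB
    simpa only [submatrix_conj_mul, conj_e13_12, conj_e13_13, conj_e13_23] using this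
  have h3 : c * a' * b' = b' * a' * c := by
    have := congrArg (fun M => M.submatrix (ecyc' (n := n)) ecyc') hYB
    simpa only [submatrix_conj_mul, conj_ecyc_12, conj_ecyc_13, conj_ecyc_23] using this
  rw [amp13_mul, amp23_mul]
  exact key_monoid a a' b b' c c' h0 h1 h2 h3
end

section
/- With structure constants c^{IJ}_K = R̃^a_{i₁}{}^{j₀}_b R⁻¹{}^b_{k₀}{}^{i₀}_c R^{k₁}_n{}^c_m R^m_a{}^n_{j₁} built from a bi-invertible solution R of the QYBE, the counit compatibility c^{IJ}_K δ^K = δ^I δ^J holds, where δ^I = δ^{i₀}_{i₁} (Kronecker delta with multi-indices I = (i₀,i₁)). -/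
open Matrix

variable {k : Type*} [Field k] {n : ℕ}

/-! Summing `c^{IJ}_K` over the diagonal `K = (k, k)` contracts the `R⁻¹` and `R` factors into
`R⁻¹ R = 1`; what remains is the defining relation `R R̃ = δ δ` of the second inverse. -/

theorem sum_braidedC_diag (R Rinv Rtil : Matrix (I2 n) (I2 n) k) (I J : I2 n) :
    ∑ K : Fin n, braidedC R Rinv Rtil I J (K, K) =
      ∑ a, ∑ b, ∑ m, ∑ nn,
        Rtil (a, J.1) (I.2, b) * (Rinv * R) (b, I.1) (nn, m) * R (m, nn) (a, J.2) := by
  simp only [braidedC, Matrix.mul_apply, Fintype.sum_prod_type, Finset.mul_sum, Finset.sum_mul,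
    mul_assoc]
  rw [Finset.sum_comm]
  refine Finset.sum_congr rfl fun a _ => ?_
  rw [Finset.sum_comm]
  refine Finset.sum_congr rfl fun b _ => ?_
  rw [Finset.sum_comm_cycle]
  refine Finset.sum_congr rfl fun m _ => ?_
  rw [Finset.sum_comm_cycle]

theorem sum_braidedC_diag_of_mul_eq_one {R Rinv : Matrix (I2 n) (I2 n) k} (h : Rinv * R = 1)
    (Rtil : Matrix (I2 n) (I2 n) k) (I J : I2 n) :
    ∑ K : Fin n, braidedC R Rinv Rtil I J (K, K) =
      ∑ a, ∑ b, R (I.1, b) (a, J.2) * Rtil (a, J.1) (I.2, b) := by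
  rw [sum_braidedC_diag, h]
  refine Finset.sum_congr rfl fun a _ => Finset.sum_congr rfl fun b _ => ?_
  simp [Matrix.one_apply, Prod.ext_iff, ite_and, mul_comm]

theorem braidedC_counit_general (R Rinv Rtil : Matrix (I2 n) (I2 n) k)
    (h2 : Rinv * R = 1)
    (ht : IsSecondInverse R Rtil) :
    ∀ I J : I2 n, ∑ K : Fin n, braidedC R Rinv Rtil I J (K, K)
      = (if I.1 = I.2 then (1 : k) else 0) * (if J.1 = J.2 then 1 else 0) := by
  intro I J
  rw [sum_braidedC_diag_of_mul_eq_one h2]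
  exact ht.2 I.1 I.2 J.1 J.2

/-- Counit compatibility `c^{IJ}_K δ^K = δ^I δ^J` for the structure constants built from a
bi-invertible solution `R` of the QYBE, where `δ^I = δ^{i₀}_{i₁}`. -/
theorem braidedC_counit (R Rinv Rtil : Matrix (I2 n) (I2 n) k)
    (hYB : QYBE R) (h1 : R * Rinv = 1) (h2 : Rinv * R = 1)
    (ht : IsSecondInverse R Rtil) :
    ∀ I J : I2 n, ∑ K : Fin n, braidedC R Rinv Rtil I J (K, K)
      = (if I.1 = I.2 then (1 : k) else 0) * (if J.1 = J.2 then 1 else 0) :=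
  braidedC_counit_general R Rinv Rtil h2 ht
end

section
/- Let R = R_{gl₂} be the standard 4×4 GL_q(2) R-matrix with q² ≠ 0, 1. In the braided-Lie algebra with structure constants c^{IJ}_K from Proposition 5.2, in the basis γ = q⁻²a + d, ξ = d − a, b, c, the brackets satisfy [b,c] = (q²−1)q⁻² ξ = −[c,b], [ξ,b] = (q⁻²+1)(q²−1) b = −q²[b,ξ], and [γ,γ] = (q⁻²+1) γ. -/
open Matrix

variable {k : Type*} [Field k] {n : ℕ}

/-- The standard `GL_q(2)` R-matrix `((q,0,0,0),(0,1,q−q⁻¹,0),(0,0,1,0),(0,0,0,q))`,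
with rows labelled `(i,k)` and columns `(j,l)` in the order `(1,1),(1,2),(2,1),(2,2)`. -/
def Rgl2 (k : Type*) [Field k] (q : k) : Matrix (I2 2) (I2 2) k :=
  Matrix.of fun p r =>
    if p = r then (if p = ((0 : Fin 2), (0 : Fin 2)) ∨ p = (1, 1) then q else 1)
    else if p = ((0 : Fin 2), (1 : Fin 2)) ∧ r = (1, 0) then q - q⁻¹ else 0

/-- The `gl_{1|1}` (Alexander–Conway) R-matrix
`((q,0,0,0),(0,1,q−q⁻¹,0),(0,0,1,0),(0,0,0,−q⁻¹))`. -/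
def Rgl11 (k : Type*) [Field k] (q : k) : Matrix (I2 2) (I2 2) k :=
  Matrix.of fun p r =>
    if p = r then
      (if p = ((0 : Fin 2), (0 : Fin 2)) then q else if p = (1, 1) then -q⁻¹ else 1)
    else if p = ((0 : Fin 2), (1 : Fin 2)) ∧ r = (1, 0) then q - q⁻¹ else 0

/-- The braided-Lie bracket extended bilinearly to coefficient vectors with respect to the
basis `u^I`: `Br(x, y)_K = Σ_{I,J} x_I y_J c^{IJ}_K`. -/
def Br {k : Type*} [Field k] (R Rinv Rtil : Matrix (I2 2) (I2 2) k)
    (x y : I2 2 → k) : I2 2 → k :=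
  fun K => ∑ I, ∑ J, x I * y J * braidedC R Rinv Rtil I J K

/-- Coefficient vector of the generator `a = u¹₁`. -/
def va (k : Type*) [Field k] : I2 2 → k := fun K => if K = (0, 0) then 1 else 0

/-- Coefficient vector of the generator `b = u¹₂`. -/
def vb (k : Type*) [Field k] : I2 2 → k := fun K => if K = (0, 1) then 1 else 0

/-- Coefficient vector of the generator `c = u²₁`. -/
def vc (k : Type*) [Field k] : I2 2 → k := fun K => if K = (1, 0) then 1 else 0

/-- Coefficient vector of the generator `d = u²₂`. -/
def vd (k : Type*) [Field k] : I2 2 → k := fun K => if K = (1, 1) then 1 else 0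

/-!
`R⁻¹` and `R̃` are determined by `R`: `R⁻¹` as a one-sided inverse in a monoid, and
`R̃` because the partial transpose `t₂` turns its defining relations into the matrix identity
`R^{t₂} R̃^{t₂} = 1`. For `GL_q(2)` this gives `R⁻¹ = R(q⁻¹)` and an explicit `R̃`, after which the
brackets of the generators `a, b, c, d` are a finite computation with the structure constants,
and the brackets of `γ` and `ξ` follow by bilinearity.
-/

section PartialTranspose

variable {α : Type*}

/-- `A^{t₂}`, the transpose in the second tensor factor. -/
def partialTranspose₂ (A : Matrix (I2 n) (I2 n) α) : Matrix (I2 n) (I2 n) α :=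
  Matrix.of fun p r => A (p.1, r.2) (r.1, p.2)

@[simp]
lemma partialTranspose₂_partialTranspose₂ (A : Matrix (I2 n) (I2 n) α) :
    partialTranspose₂ (partialTranspose₂ A) = A :=
  rfl

lemma partialTranspose₂_injective :
    Function.Injective (partialTranspose₂ : Matrix (I2 n) (I2 n) α → _) :=
  Function.LeftInverse.injective partialTranspose₂_partialTranspose₂

lemma partialTranspose₂_mul_apply [NonUnitalNonAssocSemiring α] (A B : Matrix (I2 n) (I2 n) α)
    (i l j m : Fin n) :
    (partialTranspose₂ A * partialTranspose₂ B) (i, l) (j, m)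
      = ∑ a, ∑ b, A (i, b) (a, l) * B (a, m) (j, b) := by
  rw [Matrix.mul_apply, Fintype.sum_prod_type]
  rfl

end PartialTranspose

namespace IsSecondInverse

variable {R Rtil : Matrix (I2 n) (I2 n) k}

lemma partialTranspose₂_mul_eq_one (h : IsSecondInverse R Rtil) :
    partialTranspose₂ R * partialTranspose₂ Rtil = 1 := by
  ext ⟨i, l⟩ ⟨j, m⟩
  rw [partialTranspose₂_mul_apply, h.2 i j m l, Matrix.one_apply]
  simp only [Prod.mk.injEq, ite_and, ite_mul, one_mul, zero_mul, eq_comm (a := m)]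

lemma eq_of_partialTranspose₂_mul_eq_one (h : IsSecondInverse R Rtil)
    {S : Matrix (I2 n) (I2 n) k} (hS : partialTranspose₂ S * partialTranspose₂ R = 1) :
    Rtil = S :=
  partialTranspose₂_injective (left_inv_eq_right_inv hS h.partialTranspose₂_mul_eq_one).symm

end IsSecondInverse

section Bilinear

variable (R Rinv Rtil : Matrix (I2 2) (I2 2) k) (x y z : I2 2 → k) (c : k)

lemma Br_add_left : Br R Rinv Rtil (x + y) z = Br R Rinv Rtil x z + Br R Rinv Rtil y z := by
  ext K
  simp only [Br, Pi.add_apply, add_mul, Finset.sum_add_distrib]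

lemma Br_sub_left : Br R Rinv Rtil (x - y) z = Br R Rinv Rtil x z - Br R Rinv Rtil y z := by
  ext K
  simp only [Br, Pi.sub_apply, sub_mul, Finset.sum_sub_distrib]

lemma Br_smul_left : Br R Rinv Rtil (c • x) y = c • Br R Rinv Rtil x y := by
  ext K
  simp only [Br, Pi.smul_apply, smul_eq_mul, Finset.mul_sum, mul_assoc]

lemma Br_add_right : Br R Rinv Rtil x (y + z) = Br R Rinv Rtil x y + Br R Rinv Rtil x z := by
  ext K
  simp only [Br, Pi.add_apply, mul_add, add_mul, Finset.sum_add_distrib]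

lemma Br_sub_right : Br R Rinv Rtil x (y - z) = Br R Rinv Rtil x y - Br R Rinv Rtil x z := by
  ext K
  simp only [Br, Pi.sub_apply, mul_sub, sub_mul, Finset.sum_sub_distrib]

lemma Br_smul_right : Br R Rinv Rtil x (c • y) = c • Br R Rinv Rtil x y := by
  ext K
  simp only [Br, Pi.smul_apply, smul_eq_mul, Finset.mul_sum]
  exact Finset.sum_congr rfl fun _ _ => Finset.sum_congr rfl fun _ _ => by ring

lemma Br_basis (I J : I2 2) :
    Br R Rinv Rtil (fun K => if K = I then 1 else 0) (fun K => if K = J then 1 else 0)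
      = braidedC R Rinv Rtil I J := by
  ext K
  simp [Br, ite_mul]

end Bilinear

def Rgl2Til (k : Type*) [Field k] (q : k) : Matrix (I2 2) (I2 2) k :=
  Matrix.of fun p r =>
    if p = r then (if p = ((0 : Fin 2), (0 : Fin 2)) ∨ p = (1, 1) then q⁻¹ else 1)
    else if p = ((0 : Fin 2), (1 : Fin 2)) ∧ r = (1, 0) then (q⁻¹ - q) * q⁻¹ ^ 2 else 0

section GLq2

variable {q : k}

lemma Rgl2_inv_mul_Rgl2 (hq : q ≠ 0) : Rgl2 k q⁻¹ * Rgl2 k q = 1 := by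
  ext ⟨i, l⟩ ⟨j, m⟩
  fin_cases i <;> fin_cases l <;> fin_cases j <;> fin_cases m <;>
    simp [Matrix.mul_apply, Fintype.sum_prod_type, Fin.sum_univ_two, Rgl2, hq]

lemma partialTranspose₂_Rgl2Til_mul (hq : q ≠ 0) :
    partialTranspose₂ (Rgl2Til k q) * partialTranspose₂ (Rgl2 k q) = 1 := by
  ext ⟨i, l⟩ ⟨j, m⟩
  rw [partialTranspose₂_mul_apply]
  fin_cases i <;> fin_cases l <;> fin_cases j <;> fin_cases m <;>
    simp [Fin.sum_univ_two, Rgl2, Rgl2Til]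
  all_goals field_simp
  all_goals ring

local notation "⟪" x ", " y "⟫" => Br (Rgl2 k q) (Rgl2 k q⁻¹) (Rgl2Til k q) x y

lemma Rgl2_bracket_a_a (hq : q ≠ 0) :
    ⟪va k, va k⟫ = va k := by
  unfold va
  rw [Br_basis]
  ext ⟨i, j⟩
  fin_cases i <;> fin_cases j <;> simp [braidedC, Fin.sum_univ_two, Rgl2, Rgl2Til]
  all_goals field_simp

lemma Rgl2_bracket_a_b (hq : q ≠ 0) :
    ⟪va k, vb k⟫ = q⁻¹ ^ 2 • vb k := by
  unfold va vb
  rw [Br_basis]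
  ext ⟨i, j⟩
  fin_cases i <;> fin_cases j <;> simp [braidedC, Fin.sum_univ_two, Rgl2, Rgl2Til]
  all_goals field_simp

lemma Rgl2_bracket_a_d :
    ⟪va k, vd k⟫ = vd k := by
  unfold va vd
  rw [Br_basis]
  ext ⟨i, j⟩
  fin_cases i <;> fin_cases j <;> simp [braidedC, Fin.sum_univ_two, Rgl2, Rgl2Til]

lemma Rgl2_bracket_b_a (hq : q ≠ 0) :
    ⟪vb k, va k⟫ = (1 - q⁻¹ ^ 2) • vb k := by
  unfold va vb
  rw [Br_basis]
  ext ⟨i, j⟩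
  fin_cases i <;> fin_cases j <;> simp [braidedC, Fin.sum_univ_two, Rgl2, Rgl2Til]
  all_goals field_simp

lemma Rgl2_bracket_b_c (hq : q ≠ 0) :
    ⟪vb k, vc k⟫ = (1 - q⁻¹ ^ 2) • (vd k - va k) := by
  unfold va vb vc vd
  rw [Br_basis]
  ext ⟨i, j⟩
  fin_cases i <;> fin_cases j <;> simp [braidedC, Fin.sum_univ_two, Rgl2, Rgl2Til]
  all_goals field_simp

lemma Rgl2_bracket_b_d (hq : q ≠ 0) :
    ⟪vb k, vd k⟫ = (q⁻¹ ^ 4 - q⁻¹ ^ 2) • vb k := by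
  unfold vb vd
  rw [Br_basis]
  ext ⟨i, j⟩
  fin_cases i <;> fin_cases j <;> simp [braidedC, Fin.sum_univ_two, Rgl2, Rgl2Til]
  all_goals field_simp

lemma Rgl2_bracket_c_b (hq : q ≠ 0) :
    ⟪vc k, vb k⟫ = (1 - q⁻¹ ^ 2) • (va k - vd k) := by
  unfold va vb vc vd
  rw [Br_basis]
  ext ⟨i, j⟩
  fin_cases i <;> fin_cases j <;> simp [braidedC, Fin.sum_univ_two, Rgl2, Rgl2Til]
  all_goals field_simp

lemma Rgl2_bracket_d_a (hq : q ≠ 0) :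
    ⟪vd k, va k⟫ = (q⁻¹ ^ 2 - 1 + q ^ 2) • va k + (2 - q⁻¹ ^ 2 - q ^ 2) • vd k := by
  unfold va vd
  rw [Br_basis]
  ext ⟨i, j⟩
  fin_cases i <;> fin_cases j <;> simp [braidedC, Fin.sum_univ_two, Rgl2, Rgl2Til]
  all_goals field_simp
  all_goals ring

lemma Rgl2_bracket_d_b (hq : q ≠ 0) :
    ⟪vd k, vb k⟫ = q ^ 2 • vb k := by
  unfold vb vd
  rw [Br_basis]
  ext ⟨i, j⟩
  fin_cases i <;> fin_cases j <;> simp [braidedC, Fin.sum_univ_two, Rgl2, Rgl2Til]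
  all_goals field_simp

lemma Rgl2_bracket_d_d (hq : q ≠ 0) :
    ⟪vd k, vd k⟫ = (2 * q⁻¹ ^ 2 - q⁻¹ ^ 4 - 1) • va k + (q⁻¹ ^ 4 - 2 * q⁻¹ ^ 2 + 2) • vd k := by
  unfold va vd
  rw [Br_basis]
  ext ⟨i, j⟩
  fin_cases i <;> fin_cases j <;> simp [braidedC, Fin.sum_univ_two, Rgl2, Rgl2Til]
  all_goals field_simp
  all_goals ring

end GLq2

theorem gl2_braided_brackets_general (q : k) (hq0 : q ≠ 0)
    (Rinv Rtil : Matrix (I2 2) (I2 2) k)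
    (h1 : Rgl2 k q * Rinv = 1)
    (ht : IsSecondInverse (Rgl2 k q) Rtil) :
    let R := Rgl2 k q
    let ξv : I2 2 → k := vd k - va k
    let γv : I2 2 → k := (q⁻¹) ^ 2 • va k + vd k
    Br R Rinv Rtil (vb k) (vc k) = ((q ^ 2 - 1) * (q⁻¹) ^ 2) • ξv
    ∧ Br R Rinv Rtil (vc k) (vb k) = -(((q ^ 2 - 1) * (q⁻¹) ^ 2) • ξv)
    ∧ Br R Rinv Rtil ξv (vb k) = (((q⁻¹) ^ 2 + 1) * (q ^ 2 - 1)) • vb k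
    ∧ Br R Rinv Rtil ξv (vb k) = (-(q ^ 2)) • Br R Rinv Rtil (vb k) ξv
    ∧ Br R Rinv Rtil γv γv = ((q⁻¹) ^ 2 + 1) • γv := by
  obtain rfl : Rinv = Rgl2 k q⁻¹ := (left_inv_eq_right_inv (Rgl2_inv_mul_Rgl2 hq0) h1).symm
  obtain rfl : Rtil = Rgl2Til k q :=
    ht.eq_of_partialTranspose₂_mul_eq_one (partialTranspose₂_Rgl2Til_mul hq0)
  intro R ξv γv
  simp only [R, ξv, γv, Br_add_left, Br_add_right, Br_sub_left, Br_sub_right, Br_smul_left,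
    Br_smul_right, Rgl2_bracket_a_a hq0, Rgl2_bracket_a_b hq0, Rgl2_bracket_a_d,
    Rgl2_bracket_b_a hq0, Rgl2_bracket_b_c hq0, Rgl2_bracket_b_d hq0, Rgl2_bracket_c_b hq0,
    Rgl2_bracket_d_a hq0, Rgl2_bracket_d_b hq0, Rgl2_bracket_d_d hq0]
  refine ⟨?_, ?_, ?_, ?_, ?_⟩ <;> match_scalars <;> field_simp <;> ring

/-- For the standard `GL_q(2)` R-matrix with `q² ≠ 0,1`, in the basis
`γ = q⁻²a + d`, `ξ = d − a`, `b`, `c`, the braided-Lie brackets satisfy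
`[b,c] = (q²−1)q⁻² ξ = −[c,b]`, `[ξ,b] = (q⁻²+1)(q²−1) b = −q²[b,ξ]`, and
`[γ,γ] = (q⁻²+1) γ`. -/
theorem gl2_braided_brackets (q : k) (hq0 : q ≠ 0) (hq1 : q ^ 2 ≠ 1)
    (Rinv Rtil : Matrix (I2 2) (I2 2) k)
    (h1 : Rgl2 k q * Rinv = 1) (h2 : Rinv * Rgl2 k q = 1)
    (ht : IsSecondInverse (Rgl2 k q) Rtil) :
    let R := Rgl2 k q
    let ξv : I2 2 → k := vd k - va k
    let γv : I2 2 → k := (q⁻¹) ^ 2 • va k + vd k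
    Br R Rinv Rtil (vb k) (vc k) = ((q ^ 2 - 1) * (q⁻¹) ^ 2) • ξv
    ∧ Br R Rinv Rtil (vc k) (vb k) = -(((q ^ 2 - 1) * (q⁻¹) ^ 2) • ξv)
    ∧ Br R Rinv Rtil ξv (vb k) = (((q⁻¹) ^ 2 + 1) * (q ^ 2 - 1)) • vb k
    ∧ Br R Rinv Rtil ξv (vb k) = (-(q ^ 2)) • Br R Rinv Rtil (vb k) ξv
    ∧ Br R Rinv Rtil γv γv = ((q⁻¹) ^ 2 + 1) • γv :=
  gl2_braided_brackets_general q hq0 Rinv Rtil h1 ht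
end

section
/- If R is a triangular solution of the QYBE (R₂₁R₁₂ = 1), then the structure constants of the associated matrix braided-Lie algebra are trivial: c^{IJ}_K = δ^I δ^J_K, equivalently [χ^I, χ^J] = 0 on the shifted generators χ^I = u^I − δ^I. -/
/-!
Triangularity makes the R-matrix its own flipped inverse: `R⁻¹ = R₂₁`. Substituting this, the
last two factors `R^{k₁}_n{}^c_m R^m_a{}^n_{j₁}` of `c^{IJ}_K` form an entry of `R R₂₁ = 1`, which
contracts `c` with `a` and forces `k₁ = j₁`; what remains, `R̃^a_{i₁}{}^{j₀}_b (R₂₁)^b_{k₀}{}^{i₀}_a`,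
is a contraction of `R` against its second inverse and equals `δ^{i₀}_{i₁} δ^{j₀}_{k₀}`.
-/

open Matrix

variable {k : Type*} [Field k] {n : ℕ}

lemma mul_flipM_apply (A B : Matrix (I2 n) (I2 n) k) (p : I2 n) (i j : Fin n) :
    (A * flipM B) p (i, j) = ∑ x, ∑ y, A p (x, y) * B (y, x) (j, i) := by
  simp [Matrix.mul_apply, Fintype.sum_prod_type, flipM]

lemma braidedC_eq_of_mul_flipM_eq_one {R Rinv Rtil : Matrix (I2 n) (I2 n) k}
    (h : R * flipM R = 1) (I J K : I2 n) :
    braidedC R Rinv Rtil I J K = (if J.2 = K.2 then 1 else 0) *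
      ∑ a, ∑ b, Rtil (a, J.1) (I.2, b) * Rinv (b, I.1) (K.1, a) := by
  have contract : ∀ c a : Fin n, ∑ m, ∑ nn, R (K.2, c) (nn, m) * R (m, nn) (a, J.2) =
      if J.2 = K.2 ∧ a = c then 1 else 0 := by
    intro c a
    rw [Finset.sum_comm, ← mul_flipM_apply, h, Matrix.one_apply]
    simp only [Prod.ext_iff, eq_comm]
  have factor : braidedC R Rinv Rtil I J K = ∑ a, ∑ b, ∑ c,
      Rtil (a, J.1) (I.2, b) * Rinv (b, I.1) (K.1, c) *
        ∑ m, ∑ nn, R (K.2, c) (nn, m) * R (m, nn) (a, J.2) := by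
    simp only [braidedC, Finset.mul_sum, mul_assoc]
  simp only [factor, contract, Finset.mul_sum]
  by_cases hJK : J.2 = K.2 <;> simp [hJK]

lemma IsSecondInverse.sum_sum_mul_flipM {R Rtil : Matrix (I2 n) (I2 n) k}
    (ht : IsSecondInverse R Rtil) (i i' j l : Fin n) :
    ∑ a, ∑ b, Rtil (a, j) (i', b) * flipM R (b, i) (l, a) =
      (if i = i' then 1 else 0) * (if j = l then 1 else 0) := by
  simp only [flipM, Matrix.of_apply, mul_comm (Rtil _ _)]
  exact ht.2 i i' j l

theorem triangular_trivial_bracket_general (R Rinv Rtil : Matrix (I2 n) (I2 n) k)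
    (htri : flipM R * R = 1)
    (h1 : R * Rinv = 1)
    (ht : IsSecondInverse R Rtil) :
    ∀ I J K : I2 n, braidedC R Rinv Rtil I J K
      = (if I.1 = I.2 then (1 : k) else 0) * (if J = K then 1 else 0) := by
  intro I J K
  obtain rfl : Rinv = flipM R := (left_inv_eq_right_inv htri h1).symm
  rw [braidedC_eq_of_mul_flipM_eq_one h1, ht.sum_sum_mul_flipM]
  simp only [Prod.ext_iff, ite_and, mul_ite, mul_zero, mul_one]
  split_ifs <;> rfl

/-- If `R` is a bi-invertible triangular solution of the QYBE (`R₂₁R₁₂ = 1`), then the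
structure constants of the associated matrix braided-Lie algebra are trivial:
`c^{IJ}_K = δ^I δ^J_K`  (equivalently, `[χ^I, χ^J] = 0` on the shifted generators). -/
theorem triangular_trivial_bracket (R Rinv Rtil : Matrix (I2 n) (I2 n) k)
    (hYB : QYBE R) (htri : flipM R * R = 1)
    (h1 : R * Rinv = 1) (h2 : Rinv * R = 1)
    (ht : IsSecondInverse R Rtil) :
    ∀ I J K : I2 n, braidedC R Rinv Rtil I J K
      = (if I.1 = I.2 then (1 : k) else 0) * (if J = K then 1 else 0) :=
  triangular_trivial_bracket_general R Rinv Rtil htri h1 ht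
end
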